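/- arXiv:1902.07782 — 5 statements merged into one kernel-verified Lean document; each statement's English description precedes it below -/
import Mathlib

section
/- Every nonzero m-full integer x (i.e. an integer such that p^m divides x whenever a prime p divides x) can be written uniquely in the form x = sign(x) · u^m · ∏_{r=1}^{m-1} v_r^{m+r}, where u, v_1, …, v_{m-1} are positive integers, each v_r is squarefree, and the v_r are pairwise coprime. -/
private lemma factz_prod_primes {T : Finset ℕ} (hT : ∀ p ∈ T, p.Prime) (q : ℕ) :
    (∏ p ∈ T, p).factorization q = if q ∈ T then 1 else 0 := by
  rw [Nat.factorization_prod (fun p hp => (hT p hp).pos.ne')]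
  rw [Finsupp.finset_sum_apply]
  rw [Finset.sum_congr rfl (fun p hp => by
    rw [(hT p hp).factorization, Finsupp.single_apply])]
  simp [Finset.sum_ite_eq]

private lemma rep_factorization {m : ℕ} (u : ℕ) (hu : u ≠ 0) (v : Fin (m - 1) → ℕ)
    (hv : ∀ r, v r ≠ 0) (q : ℕ) :
    (u ^ m * ∏ r : Fin (m - 1), v r ^ (m + 1 + (r : ℕ))).factorization q
      = m * u.factorization q + ∑ r : Fin (m - 1), (m + 1 + (r : ℕ)) * (v r).factorization q := by
  rw [Nat.factorization_mul (pow_ne_zero _ hu)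
      (Finset.prod_ne_zero_iff.mpr fun r _ => pow_ne_zero _ (hv r)),
    Nat.factorization_pow, Nat.factorization_prod (fun r _ => pow_ne_zero _ (hv r))]
  simp [Finsupp.finset_sum_apply, Nat.factorization_pow]

private lemma mfull_nat (m : ℕ) (hm : 2 ≤ m) (n : ℕ) (hn : n ≠ 0)
    (hfull : ∀ p : ℕ, p.Prime → p ∣ n → m ≤ n.factorization p) :
    ∃! uv : ℕ × (Fin (m - 1) → ℕ),
      0 < uv.1 ∧ (∀ r, Squarefree (uv.2 r)) ∧
      (∀ r r' : Fin (m - 1), r ≠ r' → Nat.Coprime (uv.2 r) (uv.2 r')) ∧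
      n = uv.1 ^ m * ∏ r : Fin (m - 1), (uv.2 r) ^ (m + 1 + (r : ℕ)) := by
  set S : Fin (m - 1) → Finset ℕ :=
    fun r => n.primeFactors.filter fun p => n.factorization p % m = (r : ℕ) + 1 with hS
  set v : Fin (m - 1) → ℕ := fun r => ∏ p ∈ S r, p with hv
  set u : ℕ := ∏ p ∈ n.primeFactors,
    p ^ (n.factorization p / m - if n.factorization p % m = 0 then 0 else 1) with hu
  have hSprime : ∀ r, ∀ p ∈ S r, p.Prime :=
    fun r p hp => Nat.prime_of_mem_primeFactors (Finset.mem_filter.mp hp).1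
  have hvfz : ∀ r q, (v r).factorization q = if q ∈ S r then 1 else 0 :=
    fun r q => factz_prod_primes (hSprime r) q
  have hvpos : ∀ r, 0 < v r := fun r => Finset.prod_pos fun p hp => (hSprime r p hp).pos
  have hvsq : ∀ r, Squarefree (v r) := by
    intro r
    rw [Nat.squarefree_iff_factorization_le_one (hvpos r).ne']
    intro p; rw [hvfz]; split <;> omega
  have hvcop : ∀ r r', r ≠ r' → Nat.Coprime (v r) (v r') := by
    intro r r' hne
    apply Nat.Coprime.prod_left; intro p hp
    apply Nat.Coprime.prod_right; intro p' hp'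
    rw [Nat.coprime_primes (hSprime r p hp) (hSprime r' p' hp')]
    rintro rfl
    have h1 := (Finset.mem_filter.mp hp).2
    have h2 := (Finset.mem_filter.mp hp').2
    exact hne (Fin.ext (by omega))
  have hupos : 0 < u :=
    Finset.prod_pos fun p hp => pow_pos (Nat.prime_of_mem_primeFactors hp).pos _
  have hufz : ∀ q, u.factorization q = if q ∈ n.primeFactors then
      (n.factorization q / m - if n.factorization q % m = 0 then 0 else 1) else 0 := by
    intro q
    rw [hu, Nat.factorization_prod
      (fun p hp => pow_ne_zero _ (Nat.prime_of_mem_primeFactors hp).pos.ne')]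
    rw [Finsupp.finset_sum_apply]
    rw [Finset.sum_congr rfl (fun p hp => by
      rw [(Nat.prime_of_mem_primeFactors hp).factorization_pow, Finsupp.single_apply])]
    rw [Finset.sum_ite_eq' n.primeFactors q]
  have hsum : ∀ q ∈ n.primeFactors,
      (∑ r : Fin (m - 1), (m + 1 + (r : ℕ)) * (if q ∈ S r then 1 else 0))
        = if n.factorization q % m = 0 then 0 else m + n.factorization q % m := by
    intro q hq
    by_cases h0 : n.factorization q % m = 0
    · rw [if_pos h0]
      apply Finset.sum_eq_zero
      intro r _
      have : q ∉ S r := by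
        intro hmem
        have := (Finset.mem_filter.mp hmem).2
        omega
      simp [this]
    · rw [if_neg h0]
      have hslt : n.factorization q % m < m := Nat.mod_lt _ (by omega)
      set s := n.factorization q % m with hs
      have hr0lt : s - 1 < m - 1 := by omega
      rw [Finset.sum_eq_single (⟨s - 1, hr0lt⟩ : Fin (m - 1))]
      · have hmem : q ∈ S (⟨s - 1, hr0lt⟩ : Fin (m - 1)) :=
          Finset.mem_filter.mpr ⟨hq, by simp; omega⟩
        rw [if_pos hmem]
        simp; omega
      · intro r _ hne
        have : q ∉ S r := by
          intro hmem
          have := (Finset.mem_filter.mp hmem).2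
          exact hne (Fin.ext (by simp; omega))
        simp [this]
      · intro h; exact absurd (Finset.mem_univ _) h
  have hP : (∏ r : Fin (m - 1), v r ^ (m + 1 + (r : ℕ))) ≠ 0 :=
    Finset.prod_ne_zero_iff.mpr fun r _ => pow_ne_zero _ (hvpos r).ne'
  have hrhs : u ^ m * ∏ r : Fin (m - 1), v r ^ (m + 1 + (r : ℕ)) ≠ 0 :=
    mul_ne_zero (pow_ne_zero _ hupos.ne') hP
  have hmain : n = u ^ m * ∏ r : Fin (m - 1), v r ^ (m + 1 + (r : ℕ)) := by
    refine Nat.factorization_inj hn hrhs ?_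
    ext q
    rw [rep_factorization u hupos.ne' v (fun r => (hvpos r).ne') q, hufz q]
    simp only [hvfz]
    by_cases hq : q ∈ n.primeFactors
    · rw [hsum q hq, if_pos hq]
      have he : m ≤ n.factorization q :=
        hfull q (Nat.prime_of_mem_primeFactors hq) (Nat.dvd_of_mem_primeFactors hq)
      have hdm := Nat.div_add_mod (n.factorization q) m
      have h1 : 1 ≤ n.factorization q / m := (Nat.one_le_div_iff (by omega)).mpr he
      by_cases h0 : n.factorization q % m = 0
      · rw [if_pos h0, if_pos h0]
        simp only [Nat.sub_zero]
        omega
      · rw [if_neg h0, if_neg h0]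
        have hms : m * (n.factorization q / m - 1) = m * (n.factorization q / m) - m := by
          rw [Nat.mul_sub, mul_one]
        have hml : m * 1 ≤ m * (n.factorization q / m) := Nat.mul_le_mul_left m h1
        omega
    · have hq0 : n.factorization q = 0 := by
        rw [← Finsupp.notMem_support_iff, Nat.support_factorization]; exact hq
      have hqS : ∀ r, q ∉ S r := fun r hmem => hq (Finset.mem_filter.mp hmem).1
      simp [hq0, hq, hqS]
  refine ⟨⟨u, v⟩, ⟨hupos, hvsq, hvcop, hmain⟩, ?_⟩
  rintro ⟨u', v'⟩ ⟨hu', hsq', hcop', heq'⟩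
  simp only at hu' hsq' hcop' heq' ⊢
  have hv'0 : ∀ r, v' r ≠ 0 := fun r => (hsq' r).ne_zero
  have hE' : ∀ q, n.factorization q
      = m * u'.factorization q + ∑ r : Fin (m - 1), (m + 1 + (r : ℕ)) * (v' r).factorization q := by
    intro q
    rw [heq', rep_factorization u' hu'.ne' v' hv'0 q]
  have hw : ∀ (r : Fin (m - 1)) (q : ℕ), q.Prime → q ∣ v' r → q ∈ S r := by
    intro r q hq hdvd
    have h1 : (v' r).factorization q = 1 :=
      Nat.factorization_eq_one_of_squarefree (hsq' r) hq hdvd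
    have hothers : ∀ r', r' ≠ r → (v' r').factorization q = 0 := by
      intro r' hne
      apply Nat.factorization_eq_zero_of_not_dvd
      intro hdvd'
      exact hq.not_dvd_one ((Nat.dvd_gcd hdvd' hdvd).trans (hcop' r' r hne).dvd)
    have hsum' : (∑ r' : Fin (m - 1), (m + 1 + (r' : ℕ)) * (v' r').factorization q)
        = m + 1 + (r : ℕ) := by
      rw [Finset.sum_eq_single r]
      · rw [h1, mul_one]
      · intro r' _ hne; rw [hothers r' hne, mul_zero]
      · intro h; exact absurd (Finset.mem_univ _) h
    have heqq := hE' q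
    rw [hsum'] at heqq
    have hqn : q ∣ n := by
      rw [heq']
      have t1 : v' r ∣ v' r ^ (m + 1 + (r : ℕ)) := dvd_pow_self _ (by omega)
      have t2 : v' r ^ (m + 1 + (r : ℕ)) ∣ ∏ x : Fin (m - 1), v' x ^ (m + 1 + (x : ℕ)) :=
        Finset.dvd_prod_of_mem (fun x : Fin (m - 1) => v' x ^ (m + 1 + (x : ℕ)))
          (Finset.mem_univ r)
      exact (hdvd.trans t1).trans (t2.trans (dvd_mul_left _ _))
    have hrlt := r.isLt
    have hmod : n.factorization q % m = (r : ℕ) + 1 := by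
      rw [heqq, show m * u'.factorization q + (m + 1 + (r : ℕ))
          = m * (u'.factorization q + 1) + ((r : ℕ) + 1) by ring, Nat.mul_add_mod]
      exact Nat.mod_eq_of_lt (by omega)
    exact Finset.mem_filter.mpr ⟨Nat.mem_primeFactors.mpr ⟨hq, hqn, hn⟩, hmod⟩
  have hPF : ∀ r, (v' r).primeFactors = S r := by
    intro r; ext q
    constructor
    · intro hq
      exact hw r q (Nat.prime_of_mem_primeFactors hq) (Nat.dvd_of_mem_primeFactors hq)
    · intro hq
      obtain ⟨hq1, hq2⟩ := Finset.mem_filter.mp hq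
      have hqp : q.Prime := Nat.prime_of_mem_primeFactors hq1
      by_cases hall : ∀ r', (v' r').factorization q = 0
      · exfalso
        have h := hE' q
        rw [Finset.sum_eq_zero (fun r' _ => by rw [hall r', mul_zero])] at h
        have : n.factorization q % m = 0 := by
          rw [h, add_zero, Nat.mul_mod_right]
        omega
      · push_neg at hall
        obtain ⟨r', hr'⟩ := hall
        have hdvd : q ∣ v' r' := Nat.dvd_of_factorization_pos hr'
        have hmem := hw r' q hqp hdvd
        have hmod := (Finset.mem_filter.mp hmem).2
        have : r' = r := Fin.ext (by omega)
        subst this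
        exact Nat.mem_primeFactors.mpr ⟨hqp, hdvd, hv'0 r'⟩
  have hveq : v' = v := by
    funext r
    rw [← Nat.prod_primeFactors_of_squarefree (hsq' r), hPF r]
  have hueq : u' = u := by
    have h : u' ^ m = u ^ m := by
      apply Nat.eq_of_mul_eq_mul_right (Nat.pos_of_ne_zero hP)
      rw [← hmain, heq', hveq]
    exact Nat.pow_left_injective (by omega) h
  exact Prod.ext hueq hveq

/-- Every nonzero `m`-full integer `x` can be written uniquely as
`x = sign x * u^m * ∏_{r=1}^{m-1} v_r^{m+r}` with `u, v_r` positive,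
each `v_r` squarefree and the `v_r` pairwise coprime. -/
theorem mfull_unique_representation (m : ℕ) (hm : 2 ≤ m) (x : ℤ) (hx : x ≠ 0)
    (hfull : ∀ p : ℕ, p.Prime → (p : ℤ) ∣ x → (p : ℤ) ^ m ∣ x) :
    ∃! uv : ℕ × (Fin (m - 1) → ℕ),
      0 < uv.1 ∧ (∀ r, Squarefree (uv.2 r)) ∧
      (∀ r r' : Fin (m - 1), r ≠ r' → Nat.Coprime (uv.2 r) (uv.2 r')) ∧
      x = Int.sign x * ((uv.1 : ℤ) ^ m *
        ∏ r : Fin (m - 1), ((uv.2 r : ℤ)) ^ (m + 1 + (r : ℕ))) := by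
  set n := x.natAbs with hndef
  have hn : n ≠ 0 := Int.natAbs_ne_zero.mpr hx
  have hsx : x.sign * (n : ℤ) = x := Int.sign_mul_natAbs x
  have hsne : x.sign ≠ 0 := fun h => hx (Int.sign_eq_zero_iff_zero.mp h)
  have hfull' : ∀ p : ℕ, p.Prime → p ∣ n → m ≤ n.factorization p := by
    intro p hp hdvd
    have h1 : (p : ℤ) ∣ x := Int.natCast_dvd.mpr hdvd
    have h2 : (p : ℤ) ^ m ∣ x := hfull p hp h1
    have h3 : p ^ m ∣ n := by
      rw [hndef, ← Int.natAbs_natCast (p ^ m)]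
      exact Int.natAbs_dvd_natAbs.mpr (by exact_mod_cast h2)
    exact (Nat.Prime.pow_dvd_iff_le_factorization hp hn).mp h3
  obtain ⟨⟨u, v⟩, ⟨h1, h2, h3, h4⟩, huniq⟩ := mfull_nat m hm n hn hfull'
  have hcast : ∀ (a : ℕ) (w : Fin (m - 1) → ℕ),
      ((a : ℤ) ^ m * ∏ r : Fin (m - 1), ((w r : ℤ)) ^ (m + 1 + (r : ℕ)))
        = ((a ^ m * ∏ r : Fin (m - 1), (w r) ^ (m + 1 + (r : ℕ)) : ℕ) : ℤ) := by
    intro a w; push_cast; ring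
  refine ⟨⟨u, v⟩, ⟨h1, h2, h3, ?_⟩, ?_⟩
  · rw [hcast, ← h4, hsx]
  · rintro ⟨u', v'⟩ ⟨h1', h2', h3', h4'⟩
    apply huniq
    refine ⟨h1', h2', h3', ?_⟩
    have : (n : ℤ) = ((u' ^ m * ∏ r : Fin (m - 1), (v' r) ^ (m + 1 + (r : ℕ)) : ℕ) : ℤ) := by
      apply mul_left_cancel₀ hsne
      rw [hsx, ← hcast]
      exact h4'
    exact_mod_cast this
end

section
/- If x is a squarefree positive integer and d is a positive integer with d ∣ x^{k}, then d admits a factorisation d = d_1 · d_2^2 · ⋯ · d_k^k where d_1, …, d_k are squarefree, pairwise coprime positive integers with d_1 ⋯ d_k ∣ x. -/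
/-!
Sort the prime factors of `d` by their multiplicity: `D i` is the product of the primes occurring
in `d` exactly `i + 1` times. Since `x` is squarefree, every multiplicity lies between `1` and `k`,
so these products recover `d` with the right exponents, are coprime because they involve disjoint
sets of primes, and their product is the radical of `d`, which divides the squarefree `x`.
-/

theorem Fin.prod_univ_succ_eq_prod_range {M : Type*} [CommMonoid M] (f : ℕ → M) (hf : f 0 = 1)
    (k : ℕ) : ∏ i : Fin k, f (i + 1) = ∏ i ∈ Finset.range (k + 1), f i := by
  rw [Finset.prod_range_succ', hf, mul_one, Fin.prod_univ_eq_prod_range (fun i ↦ f (i + 1))]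

namespace Nat

def primeFactorsWithMultiplicity (n i : ℕ) : Finset ℕ :=
  {p ∈ n.primeFactors | n.factorization p = i}

variable {n : ℕ}

theorem primeFactorsWithMultiplicity_zero (n : ℕ) : n.primeFactorsWithMultiplicity 0 = ∅ :=
  Finset.filter_false_of_mem fun _ hp ↦
    Finsupp.mem_support_iff.1 (by rwa [support_factorization])

theorem coprime_prod_primeFactorsWithMultiplicity {i j : ℕ} (hij : i ≠ j) :
    Coprime (∏ p ∈ n.primeFactorsWithMultiplicity i, p)
      (∏ q ∈ n.primeFactorsWithMultiplicity j, q) := by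
  refine Coprime.prod_left fun p hp ↦ Coprime.prod_right fun q hq ↦ ?_
  simp only [primeFactorsWithMultiplicity, Finset.mem_filter] at hp hq
  refine (coprime_primes (prime_of_mem_primeFactors hp.1) (prime_of_mem_primeFactors hq.1)).2 ?_
  rintro rfl
  exact hij (hp.2.symm.trans hq.2)

theorem prod_fin_prod_primeFactorsWithMultiplicity {k : ℕ} (hk : ∀ p, n.factorization p ≤ k) :
    ∏ i : Fin k, ∏ p ∈ n.primeFactorsWithMultiplicity (i + 1), p = ∏ p ∈ n.primeFactors, p := by
  rw [Fin.prod_univ_succ_eq_prod_range (fun i ↦ ∏ p ∈ n.primeFactorsWithMultiplicity i, p)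
    (by rw [primeFactorsWithMultiplicity_zero, Finset.prod_empty])]
  exact Finset.prod_fiberwise_of_maps_to (fun p _ ↦ Finset.mem_range_succ_iff.2 (hk p)) _

theorem prod_fin_prod_primeFactorsWithMultiplicity_pow {k : ℕ} (hn : n ≠ 0)
    (hk : ∀ p, n.factorization p ≤ k) :
    ∏ i : Fin k, (∏ p ∈ n.primeFactorsWithMultiplicity (i + 1), p) ^ ((i : ℕ) + 1) = n := by
  rw [Fin.prod_univ_succ_eq_prod_range (fun i ↦ (∏ p ∈ n.primeFactorsWithMultiplicity i, p) ^ i)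
    (pow_zero _)]
  calc ∏ i ∈ Finset.range (k + 1), (∏ p ∈ n.primeFactorsWithMultiplicity i, p) ^ i
      = ∏ i ∈ Finset.range (k + 1), ∏ p ∈ n.primeFactorsWithMultiplicity i,
          p ^ n.factorization p := by
        refine Finset.prod_congr rfl fun i _ ↦ ?_
        rw [← Finset.prod_pow]
        exact Finset.prod_congr rfl fun p hp ↦ by rw [(Finset.mem_filter.1 hp).2]
    _ = ∏ p ∈ n.primeFactors, p ^ n.factorization p :=
        Finset.prod_fiberwise_of_maps_to (fun p _ ↦ Finset.mem_range_succ_iff.2 (hk p)) _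
    _ = n := by
        rw [← prod_factorization_eq_prod_primeFactors, prod_factorization_pow_eq_self hn]

variable {x d k : ℕ}

theorem factorization_le_of_dvd_pow_of_squarefree (hx : Squarefree x) (hd : d ∣ x ^ k) (p : ℕ) :
    d.factorization p ≤ k := by
  have hxk : x ^ k ≠ 0 := pow_ne_zero k hx.ne_zero
  calc d.factorization p ≤ (x ^ k).factorization p :=
        (factorization_le_iff_dvd (ne_zero_of_dvd_ne_zero hxk hd) hxk).2 hd p
    _ = k * x.factorization p := by rw [factorization_pow, Finsupp.smul_apply, smul_eq_mul]
    _ ≤ k := (Nat.mul_le_mul_left k (hx.natFactorization_le_one p)).trans_eq (mul_one k)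

theorem prod_primeFactors_dvd_of_dvd_pow_of_squarefree (hx : Squarefree x) (hd : d ∣ x ^ k) :
    ∏ p ∈ d.primeFactors, p ∣ x := by
  refine (prod_primeFactors_dvd_iff hx.ne_zero).2 fun p hp ↦ ?_
  have hp' := prime_of_mem_primeFactors hp
  exact mem_primeFactors.2
    ⟨hp', hp'.dvd_of_dvd_pow ((dvd_of_mem_primeFactors hp).trans hd), hx.ne_zero⟩

end Nat

theorem divisor_of_squarefree_power_factorisation_general (k : ℕ)
    (x : ℕ) (hx : Squarefree x) (d : ℕ) (hd : d ∣ x ^ k) :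
    ∃ D : Fin k → ℕ, (∀ i, Squarefree (D i)) ∧
      (∀ i j : Fin k, i ≠ j → Nat.Coprime (D i) (D j)) ∧
      d = ∏ i : Fin k, (D i) ^ ((i : ℕ) + 1) ∧
      (∏ i : Fin k, D i) ∣ x := by
  have hd0 : d ≠ 0 := ne_zero_of_dvd_ne_zero (pow_ne_zero k hx.ne_zero) hd
  have hmult := Nat.factorization_le_of_dvd_pow_of_squarefree hx hd
  have hprod : ∏ i : Fin k, ∏ p ∈ d.primeFactorsWithMultiplicity (i + 1), p ∣ x := by
    rw [Nat.prod_fin_prod_primeFactorsWithMultiplicity hmult]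
    exact Nat.prod_primeFactors_dvd_of_dvd_pow_of_squarefree hx hd
  refine ⟨fun i ↦ ∏ p ∈ d.primeFactorsWithMultiplicity (i + 1), p, fun i ↦ ?_,
    fun i j hij ↦ ?_, (Nat.prod_fin_prod_primeFactorsWithMultiplicity_pow hd0 hmult).symm, hprod⟩
  · exact hx.squarefree_of_dvd ((Finset.dvd_prod_of_mem _ (Finset.mem_univ i)).trans hprod)
  · exact Nat.coprime_prod_primeFactorsWithMultiplicity (by simpa [Fin.val_eq_val] using hij)

/-- If `x` is squarefree and `d ∣ x^k` then `d = d_1 * d_2^2 * ⋯ * d_k^k` with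
the `d_i` squarefree, pairwise coprime, and `d_1 ⋯ d_k ∣ x`. -/
theorem divisor_of_squarefree_power_factorisation (k : ℕ) (hk : 1 ≤ k)
    (x : ℕ) (hx : Squarefree x) (hx0 : 0 < x) (d : ℕ) (hd0 : 0 < d) (hd : d ∣ x ^ k) :
    ∃ D : Fin k → ℕ, (∀ i, Squarefree (D i)) ∧
      (∀ i j : Fin k, i ≠ j → Nat.Coprime (D i) (D j)) ∧
      d = ∏ i : Fin k, (D i) ^ ((i : ℕ) + 1) ∧
      (∏ i : Fin k, D i) ∣ x :=
  divisor_of_squarefree_power_factorisation_general k x hx d hd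
end

section
/- Let h, H be nonnegative integers with 0 ≤ h < H and H ≥ 1, let X ≥ 1 be real, let m ≥ 1 be an integer, let a ∈ ℤ, q ∈ ℕ, β ∈ ℝ and α = a/q + β. Then ∑_{1 ≤ u ≤ X, u ≡ h (mod H)} e(α u^m) = (X/(qH)) · (∑_{k=0}^{q-1} e(a(Hk+h)^m/q)) · ∫_0^1 e(β X^m z^m) dz + O(q + q X^m |β|), where e(t) = exp(2πi t) and the implied constant depends only on m. -/
/-!
Split `u ≡ h (mod H)` into the `q` classes `u ≡ H k + h (mod H q)`. On each class
`e(a u^m / q)` is the constant `e(a (H k + h)^m / q)`, so the sum factors into this phase times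
`∑ e(β u^m)` over an arithmetic progression of difference `d = H q`. That progression sum is a
Riemann sum of `t ↦ e(β t^m)` with mesh `d`: each of the `≈ X / d` cells contributes an error
`d · Lip`, and the Lipschitz constant on `[0, 2X]` is `O(|β| X^(m-1))`, so the sum equals
`d⁻¹ ∫_0^X e(β t^m) dt + O(1 + |β| X^m)`; when `d > X` the progression has at most one term and
both sides are `O(1)`. Rescaling `t = X z` turns the integral into the one in the statement.
-/

open scoped BigOperators

noncomputable def e (t : ℝ) : ℂ := Complex.exp (2 * Real.pi * Complex.I * t)

open Finset MeasureTheory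
open scoped Real

lemma norm_e (t : ℝ) : ‖e t‖ = 1 := by
  simp [e, Complex.norm_exp]

lemma continuous_e : Continuous e := by
  unfold e; fun_prop

lemma e_add (x y : ℝ) : e (x + y) = e x * e y := by
  simp only [e, ← Complex.exp_add]
  push_cast
  ring_nf

lemma e_intCast (n : ℤ) : e n = 1 := by
  simpa [e, mul_comm, mul_assoc, mul_left_comm] using Complex.exp_int_mul_two_pi_mul_I n

lemma norm_e_sub_e_le (s t : ℝ) : ‖e s - e t‖ ≤ 2 * π * |s - t| := by
  have h : e s - e t = e t * (Complex.exp (Complex.I * ↑(2 * π * (s - t))) - 1) := by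
    rw [mul_sub, mul_one, e, e, ← Complex.exp_add]
    push_cast
    ring_nf
  rw [h, norm_mul, norm_e, one_mul]
  refine Real.norm_exp_I_mul_ofReal_sub_one_le.trans_eq ?_
  rw [Real.norm_eq_abs, abs_mul, abs_of_pos (by positivity)]

lemma norm_e_mul_pow_sub_le (β : ℝ) (m : ℕ) {Y s t : ℝ} (hs : s ∈ Set.Icc 0 Y)
    (ht : t ∈ Set.Icc 0 Y) :
    ‖e (β * s ^ m) - e (β * t ^ m)‖ ≤ 2 * π * |β| * m * Y ^ (m - 1) * |s - t| := by
  have hmax : max |s| |t| ≤ Y := by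
    rw [abs_of_nonneg hs.1, abs_of_nonneg ht.1]
    exact max_le hs.2 ht.2
  calc ‖e (β * s ^ m) - e (β * t ^ m)‖ ≤ 2 * π * (|β| * |s ^ m - t ^ m|) := by
        rw [← abs_mul, mul_sub]
        exact norm_e_sub_e_le _ _
    _ ≤ 2 * π * (|β| * (|s - t| * m * Y ^ (m - 1))) := by
        gcongr
        exact (abs_pow_sub_pow_le s t m).trans (by gcongr)
    _ = 2 * π * |β| * m * Y ^ (m - 1) * |s - t| := by ring

lemma e_div_add_mul_pow_of_modEq {q u r : ℕ} (hq : q ≠ 0) (a : ℤ) (β : ℝ) (m : ℕ)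
    (h : u ≡ r [MOD q]) :
    e (((a : ℝ) / q + β) * (u : ℝ) ^ m) = e (a * (r : ℝ) ^ m / q) * e (β * (u : ℝ) ^ m) := by
  obtain ⟨c, hc⟩ := (Int.natCast_modEq_iff.mpr h |>.pow m).symm.dvd
  have hc' : (u : ℝ) ^ m = r ^ m + q * c := by
    rw [← sub_eq_iff_eq_add']; exact_mod_cast hc
  have hsplit : ((a : ℝ) / q + β) * (u : ℝ) ^ m
      = (a * (r : ℝ) ^ m / q + β * (u : ℝ) ^ m) + (a * c : ℤ) := by
    rw [hc']
    push_cast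
    field_simp
    ring
  rw [hsplit, e_add, e_intCast, mul_one, e_add]

lemma Nat.mod_mul_eq_mul_add_iff {u h H q k : ℕ} (hh : h < H) :
    u % (H * q) = H * k + h ↔ u % H = h ∧ u / H % q = k := by
  rw [← Nat.mod_mul_right_div_self, ← Nat.mod_mod_of_dvd u (dvd_mul_right H q), and_comm,
    Nat.div_mod_unique (by omega)]
  constructor
  · rintro h'; exact ⟨by rw [h']; ring, hh⟩
  · rintro ⟨h', -⟩; rw [← h']; ring

lemma sum_ite_mod_eq_sum_range {M : Type*} [AddCommMonoid M] (s : Finset ℕ) (g : ℕ → M)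
    {h H q : ℕ} (hh : h < H) (hq : 0 < q) :
    ∑ u ∈ s, (if u % H = h then g u else 0)
      = ∑ k ∈ range q, ∑ u ∈ s, (if u % (H * q) = H * k + h then g u else 0) := by
  rw [sum_comm]
  refine sum_congr rfl fun u _ => ?_
  simp only [Nat.mod_mul_eq_mul_add_iff hh, ite_and]
  split_ifs
  · rw [sum_ite_eq]; simp [Nat.mod_lt _ hq]
  · simp

lemma sum_ite_mod_eq_e_div_add_mul_pow (s : Finset ℕ) {h H q : ℕ} (hh : h < H) (hq : 0 < q)
    (a : ℤ) (β : ℝ) (m : ℕ) :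
    ∑ u ∈ s, (if u % H = h then e (((a : ℝ) / q + β) * (u : ℝ) ^ m) else 0)
      = ∑ k ∈ range q, e (a * ((H * k + h : ℕ) : ℝ) ^ m / q)
          * ∑ u ∈ s, (if u % (H * q) = H * k + h then e (β * (u : ℝ) ^ m) else 0) := by
  rw [sum_ite_mod_eq_sum_range s _ hh hq]
  refine sum_congr rfl fun k _ => ?_
  rw [mul_sum]
  refine sum_congr rfl fun u _ => ?_
  split_ifs with hu
  · have hmod := Nat.mod_modEq u (H * q)
    rw [hu] at hmod
    exact e_div_add_mul_pow_of_modEq hq.ne' a β m (hmod.symm.of_mul_left H)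
  · rw [mul_zero]

lemma sum_Icc_ite_mod_eq_sum_range {M : Type*} [AddCommMonoid M] (g : ℕ → M) {N d r : ℕ}
    (hd : 0 < d) (hr : r < d) :
    ∑ u ∈ Icc 1 N, (if u % d = r then g u else 0)
      = ∑ n ∈ range (N / d + 1), (if r + d * n ∈ Icc 1 N then g (r + d * n) else 0) := by
  have hdecomp : ∀ u, u % d = r → r + d * (u / d) = u := fun u hu => hu ▸ Nat.mod_add_div u d
  rw [← sum_filter, ← sum_filter]
  refine sum_nbij' (· / d) (r + d * ·) (fun u hu => ?_) (fun n hn => ?_) (fun u hu => ?_)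
    (fun n _ => ?_) (fun u hu => ?_) <;> simp only [mem_filter, mem_range] at *
  · rw [hdecomp u hu.2]
    exact ⟨Nat.lt_succ_of_le (Nat.div_le_div_right (mem_Icc.1 hu.1).2), hu.1⟩
  · rw [Nat.add_mul_mod_self_left, Nat.mod_eq_of_lt hr]
    exact ⟨hn.2, rfl⟩
  · exact hdecomp u hu.2
  · rw [Nat.add_mul_div_left _ _ hd, Nat.div_eq_of_lt hr, zero_add]
  · rw [hdecomp u hu.2]

lemma card_filter_notMem_Icc_le_two {N d r : ℕ} (hr : r < d) :
    #{n ∈ range (N / d + 1) | r + d * n ∉ Icc 1 N} ≤ 2 := by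
  refine (card_le_card fun n hn => ?_).trans (card_le_two (a := 0) (b := N / d))
  simp only [mem_filter, mem_range, mem_Icc, not_and_or, not_le] at hn
  simp only [mem_insert, mem_singleton]
  by_contra! hne
  have hmul : d * (n + 1) ≤ d * (N / d) := Nat.mul_le_mul_left d (by omega)
  have hdiv := Nat.mul_div_le N d
  have hn1 : 1 ≤ n := Nat.one_le_iff_ne_zero.2 hne.1
  rcases hn.2 with h | h <;> nlinarith

section ProgressionSum

variable {E : Type*} [NormedAddCommGroup E] [NormedSpace ℝ E]

lemma norm_inv_smul_integral_le {f : ℝ → E} {a b d B : ℝ} (hd : 0 < d) (hab : |b - a| ≤ d)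
    (hB : ∀ t, ‖f t‖ ≤ B) : ‖d⁻¹ • ∫ t in a..b, f t‖ ≤ B := by
  have hB0 : 0 ≤ B := (norm_nonneg _).trans (hB 0)
  rw [norm_smul, Real.norm_eq_abs, abs_inv, abs_of_pos hd, inv_mul_le_iff₀ hd]
  calc ‖∫ t in a..b, f t‖ ≤ B * |b - a| :=
        intervalIntegral.norm_integral_le_of_norm_le_const fun t _ => hB t
    _ ≤ d * B := by nlinarith

lemma norm_sub_inv_smul_integral_le [CompleteSpace E] {f : ℝ → E} {a b c L : ℝ} (hab : a < b)
    (hf : IntervalIntegrable f volume a b) (hc : ∀ t ∈ Set.Ioc a b, ‖f c - f t‖ ≤ L) :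
    ‖f c - (b - a)⁻¹ • ∫ t in a..b, f t‖ ≤ L := by
  have hba : 0 < b - a := sub_pos.2 hab
  have hsub : f c - (b - a)⁻¹ • ∫ t in a..b, f t = (b - a)⁻¹ • ∫ t in a..b, (f c - f t) := by
    rw [intervalIntegral.integral_sub intervalIntegrable_const hf, intervalIntegral.integral_const,
      smul_sub, smul_smul, inv_mul_cancel₀ hba.ne', one_smul]
  rw [hsub, norm_smul, Real.norm_eq_abs, abs_inv, abs_of_pos hba, inv_mul_le_iff₀ hba]
  calc ‖∫ t in a..b, (f c - f t)‖ ≤ L * |b - a| :=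
        intervalIntegral.norm_integral_le_of_norm_le_const (by rwa [Set.uIoc_of_le hab.le])
    _ = (b - a) * L := by rw [abs_of_pos hba, mul_comm]

theorem norm_sum_ite_mod_eq_sub_integral_le [CompleteSpace E] {f : ℝ → E} {X B L : ℝ}
    {d r : ℕ} (hf : Continuous f) (hB : ∀ t, ‖f t‖ ≤ B)
    (hL : ∀ s ∈ Set.Icc 0 (X + d), ∀ t ∈ Set.Icc 0 (X + d), ‖f s - f t‖ ≤ L * |s - t|)
    (hX : 0 ≤ X) (hd : 0 < d) (hr : r < d) :
    ‖∑ u ∈ Icc 1 ⌊X⌋₊, (if u % d = r then f u else 0) - (d : ℝ)⁻¹ • ∫ t in 0..X, f t‖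
      ≤ 3 * B + L * (X + d) := by
  set N := ⌊X⌋₊
  set K := N / d + 1
  have hd' : (0 : ℝ) < d := Nat.cast_pos.2 hd
  have hB0 : 0 ≤ B := (norm_nonneg _).trans (hB 0)
  have hL0 : 0 ≤ L := by
    have := hL d ⟨hd'.le, by linarith⟩ 0 ⟨le_rfl, by linarith⟩
    rw [sub_zero, abs_of_pos hd'] at this
    exact nonneg_of_mul_nonneg_left ((norm_nonneg _).trans this) hd'
  have hNX : (N : ℝ) ≤ X := Nat.floor_le hX
  have hdK : X ≤ d * K ∧ (d : ℝ) * K ≤ X + d := by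
    have h1 : N + 1 ≤ d * K := Nat.lt_mul_div_succ N hd
    have h2 : d * K ≤ N + d := by
      have := Nat.mul_div_le N d
      rw [mul_add, mul_one]; omega
    have h1' : (N : ℝ) + 1 ≤ d * K := by exact_mod_cast h1
    have h2' : (d : ℝ) * K ≤ N + d := by exact_mod_cast h2
    exact ⟨(Nat.lt_floor_add_one X).le.trans h1', h2'.trans (by linarith)⟩
  set avg : ℕ → E := fun n => (d : ℝ)⁻¹ • ∫ t in d * n..d * (n + 1 : ℕ), f t
  have hint : (d : ℝ)⁻¹ • ∫ t in 0..X, f t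
      = ∑ n ∈ range K, avg n - (d : ℝ)⁻¹ • ∫ t in X..d * K, f t := by
    have hcells := intervalIntegral.sum_integral_adjacent_intervals
      (a := fun n : ℕ => (d : ℝ) * n) (n := K) (μ := volume) fun _ _ => hf.intervalIntegrable _ _
    rw [Nat.cast_zero, mul_zero, ← intervalIntegral.integral_add_adjacent_intervals
      (hf.intervalIntegrable 0 X) (hf.intervalIntegrable X _)] at hcells
    simp only [avg, ← smul_sum, ← smul_sub, hcells, add_sub_cancel_right]
  -- `r + d n` lies in the cell `[d n, d (n + 1)]`; it falls outside `[1, N]` only for the first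
  -- and the last cell
  have hsplit : ∑ u ∈ Icc 1 N, (if u % d = r then f u else 0) - (d : ℝ)⁻¹ • ∫ t in 0..X, f t
      = ∑ n ∈ range K with r + d * n ∈ Icc 1 N, (f (r + d * n : ℕ) - avg n)
        - ∑ n ∈ range K with r + d * n ∉ Icc 1 N, avg n
        + (d : ℝ)⁻¹ • ∫ t in X..d * K, f t := by
    rw [hint, sum_Icc_ite_mod_eq_sum_range _ hd hr, ← sum_filter_add_sum_filter_not (range K)
      (fun n => r + d * n ∈ Icc 1 N) avg, sum_ite, sum_const_zero, add_zero, sum_sub_distrib]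
    abel
  have hlen : ∀ n : ℕ, (d : ℝ) * (n + 1 : ℕ) - d * n = d := fun n => by push_cast; ring
  have hcell : ∀ n ∈ range K, r + d * n ∈ Icc 1 N → ‖f (r + d * n : ℕ) - avg n‖ ≤ L * d := by
    intro n hnK hP
    have hnK' : (n : ℝ) + 1 ≤ K := by exact_mod_cast mem_range.1 hnK
    have hPN : ((r + d * n : ℕ) : ℝ) ≤ N := by exact_mod_cast (mem_Icc.1 hP).2
    have hr' : (r : ℝ) < d := by exact_mod_cast hr
    have hdn : (d : ℝ) * (n + 1) ≤ d * K := mul_le_mul_of_nonneg_left hnK' hd'.le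
    have h := norm_sub_inv_smul_integral_le (a := d * n) (b := d * (n + 1 : ℕ))
      (c := ((r + d * n : ℕ) : ℝ)) (L := L * d)
      (by rw [← sub_pos, hlen]; exact hd') (hf.intervalIntegrable _ _) fun t ht => by
        obtain ⟨ht₁, ht₂⟩ := ht
        push_cast at ht₁ ht₂ hPN ⊢
        have hn0 : (0 : ℝ) ≤ d * n := by positivity
        refine (hL _ ⟨by positivity, by linarith⟩ t ⟨by linarith, by linarith⟩).trans ?_
        gcongr
        exact abs_sub_le_iff.2 ⟨by linarith, by linarith⟩
    rwa [hlen] at h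
  have hsum_cells : ‖∑ n ∈ range K with r + d * n ∈ Icc 1 N, (f (r + d * n : ℕ) - avg n)‖
      ≤ L * (X + d) := calc
    _ ≤ ∑ n ∈ range K with r + d * n ∈ Icc 1 N, L * d :=
        norm_sum_le_of_le _ fun n hn => hcell n (mem_filter.1 hn).1 (mem_filter.1 hn).2
    _ ≤ K * (L * d) := by
        rw [sum_const, nsmul_eq_mul]
        gcongr
        exact_mod_cast (card_filter_le _ _).trans (card_range K).le
    _ = L * (d * K) := by ring
    _ ≤ L * (X + d) := by gcongr; exact hdK.2
  have hsum_missing : ‖∑ n ∈ range K with r + d * n ∉ Icc 1 N, avg n‖ ≤ 2 * B := calc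
    _ ≤ ∑ n ∈ range K with r + d * n ∉ Icc 1 N, B :=
        norm_sum_le_of_le _ fun n _ =>
          norm_inv_smul_integral_le hd' (by rw [hlen, abs_of_pos hd']) hB
    _ ≤ 2 * B := by
        rw [sum_const, nsmul_eq_mul]
        gcongr
        exact_mod_cast card_filter_notMem_Icc_le_two hr
  have htail : ‖(d : ℝ)⁻¹ • ∫ t in X..d * K, f t‖ ≤ B :=
    norm_inv_smul_integral_le hd' (by rw [abs_of_nonneg (by linarith)]; linarith) hB
  rw [hsplit]
  calc _ ≤ _ := norm_add_le_of_le (norm_sub_le_of_le hsum_cells hsum_missing) htail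
    _ = 3 * B + L * (X + d) := by ring

lemma norm_sum_ite_mod_eq_sub_integral_le_of_lt {f : ℝ → E} {X B : ℝ} {d r : ℕ}
    (hB : ∀ t, ‖f t‖ ≤ B) (hX : 0 ≤ X) (hdX : X < d) :
    ‖∑ u ∈ Icc 1 ⌊X⌋₊, (if u % d = r then f u else 0) - (d : ℝ)⁻¹ • ∫ t in 0..X, f t‖
      ≤ 2 * B := by
  have hN : ⌊X⌋₊ < d := (Nat.floor_lt hX).2 hdX
  have hsum : ∑ u ∈ Icc 1 ⌊X⌋₊, (if u % d = r then f u else 0)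
      = if r ∈ Icc 1 ⌊X⌋₊ then f r else 0 := by
    rw [← sum_ite_eq' (Icc 1 ⌊X⌋₊) r fun u => f u]
    refine sum_congr rfl fun u hu => ?_
    rw [Nat.mod_eq_of_lt ((mem_Icc.1 hu).2.trans_lt hN)]
  have hB0 : 0 ≤ B := (norm_nonneg _).trans (hB 0)
  have hsum_le : ‖∑ u ∈ Icc 1 ⌊X⌋₊, (if u % d = r then f u else 0)‖ ≤ B := by
    rw [hsum]; split_ifs
    · exact hB _
    · rwa [norm_zero]
  have hint_le : ‖(d : ℝ)⁻¹ • ∫ t in 0..X, f t‖ ≤ B :=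
    norm_inv_smul_integral_le (hX.trans_lt hdX)
      (by rw [sub_zero, abs_of_nonneg hX]; exact hdX.le) hB
  linarith [norm_sub_le_of_le hsum_le hint_le]

end ProgressionSum

theorem norm_sum_ite_mod_eq_e_mul_pow_sub_integral_le (β : ℝ) (m : ℕ) {X : ℝ} (hX : 0 ≤ X)
    {d r : ℕ} (hd : 0 < d) (hr : r < d) :
    ‖∑ u ∈ Icc 1 ⌊X⌋₊, (if u % d = r then e (β * (u : ℝ) ^ m) else 0)
        - (d : ℝ)⁻¹ • ∫ t in 0..X, e (β * t ^ m)‖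
      ≤ 3 + 2 * π * m * 2 ^ m * |β| * X ^ m := by
  have hB : ∀ t : ℝ, ‖e (β * t ^ m)‖ ≤ 1 := fun t => (norm_e _).le
  have hrest : 0 ≤ 2 * π * m * 2 ^ m * |β| * X ^ m := by positivity
  rcases lt_or_ge X d with hdX | hdX
  · linarith [norm_sum_ite_mod_eq_sub_integral_le_of_lt hB hX hdX (r := r)]
  set L := 2 * π * |β| * m * (2 * X) ^ (m - 1)
  have hL : ∀ s ∈ Set.Icc 0 (X + d), ∀ t ∈ Set.Icc 0 (X + d),
      ‖e (β * s ^ m) - e (β * t ^ m)‖ ≤ L * |s - t| := fun s hs t ht =>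
    norm_e_mul_pow_sub_le β m ⟨hs.1, by linarith [hs.2]⟩ ⟨ht.1, by linarith [ht.2]⟩
  have hLX : L * (X + d) ≤ 2 * π * m * 2 ^ m * |β| * X ^ m := by
    calc L * (X + d) ≤ L * (2 * X) := by gcongr; linarith
      _ = 2 * π * m * 2 ^ m * |β| * X ^ m := by
        rcases m with _ | m
        · simp [L]
        · simp only [L, Nat.add_sub_cancel, mul_pow]; push_cast; ring
  have hcont : Continuous fun t : ℝ => e (β * t ^ m) := continuous_e.comp (by fun_prop)
  linarith [norm_sum_ite_mod_eq_sub_integral_le hcont hB hL hX hd hr]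

lemma integral_unit_interval_e_mul_pow (β : ℝ) (m : ℕ) {X : ℝ} (hX : X ≠ 0) :
    ∫ z in (0:ℝ)..1, e (β * X ^ m * z ^ m) = X⁻¹ • ∫ t in 0..X, e (β * t ^ m) := by
  simp_rw [mul_assoc, ← mul_pow]
  simpa using intervalIntegral.integral_comp_mul_left (fun t => e (β * t ^ m)) hX (a := 0) (b := 1)

theorem major_arc_exponential_sum_approx_general (m : ℕ) :
    ∃ C : ℝ, 0 < C ∧ ∀ (h H : ℕ) (X : ℝ) (a : ℤ) (q : ℕ) (β : ℝ),
      h < H → 1 ≤ X → 0 < q →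
      ‖(∑ u ∈ Finset.Icc 1 ⌊X⌋₊,
            if u % H = h then e (((a : ℝ) / q + β) * (u : ℝ) ^ m) else 0)
        - (X / (q * H)) *
            (∑ k ∈ Finset.range q, e ((a : ℝ) * ((H * k + h : ℕ) : ℝ) ^ m / q)) *
            ∫ z in (0:ℝ)..(1:ℝ), e (β * X ^ m * z ^ m)‖
      ≤ C * ((q : ℝ) + (q : ℝ) * X ^ m * |β|) := by
  refine ⟨3 + 2 * π * m * 2 ^ m, by positivity, fun h H X a q β hh hX hq => ?_⟩
  have hX0 : X ≠ 0 := by positivity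
  have hmain : (X / (q * H)) * (∑ k ∈ range q, e ((a : ℝ) * ((H * k + h : ℕ) : ℝ) ^ m / q))
        * ∫ z in (0:ℝ)..1, e (β * X ^ m * z ^ m)
      = ∑ k ∈ range q, e ((a : ℝ) * ((H * k + h : ℕ) : ℝ) ^ m / q)
          * (((H * q : ℕ) : ℝ)⁻¹ • ∫ t in 0..X, e (β * t ^ m)) := by
    have hXc : (X : ℂ) ≠ 0 := by exact_mod_cast hX0
    rw [integral_unit_interval_e_mul_pow β m hX0, mul_sum, sum_mul]
    refine sum_congr rfl fun k _ => ?_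
    simp only [Complex.real_smul]
    push_cast
    field_simp
  rw [sum_ite_mod_eq_e_div_add_mul_pow _ hh hq, hmain, ← sum_sub_distrib]
  calc _ ≤ ∑ k ∈ range q, (3 + 2 * π * m * 2 ^ m * |β| * X ^ m) := by
        refine norm_sum_le_of_le _ fun k hk => ?_
        rw [← mul_sub, norm_mul, norm_e, one_mul]
        refine norm_sum_ite_mod_eq_e_mul_pow_sub_integral_le β m (by linarith)
          (Nat.mul_pos (by omega) hq) ?_
        calc H * k + h < H * (k + 1) := by rw [mul_add, mul_one]; omega
          _ ≤ H * q := Nat.mul_le_mul_left H (mem_range.1 hk)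
    _ ≤ _ := by
        rw [sum_const, card_range, nsmul_eq_mul]
        have : 0 ≤ 2 * π * m * 2 ^ m := by positivity
        have : (0 : ℝ) ≤ q * X ^ m * |β| := by positivity
        nlinarith

/-- Major arc approximation of the exponential sum over an arithmetic progression. -/
theorem major_arc_exponential_sum_approx (m : ℕ) (hm : 1 ≤ m) :
    ∃ C : ℝ, 0 < C ∧ ∀ (h H : ℕ) (X : ℝ) (a : ℤ) (q : ℕ) (β : ℝ),
      h < H → 1 ≤ X → 0 < q →
      ‖(∑ u ∈ Finset.Icc 1 ⌊X⌋₊,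
            if u % H = h then e (((a : ℝ) / q + β) * (u : ℝ) ^ m) else 0)
        - (X / (q * H)) *
            (∑ k ∈ Finset.range q, e ((a : ℝ) * ((H * k + h : ℕ) : ℝ) ^ m / q)) *
            ∫ z in (0:ℝ)..(1:ℝ), e (β * X ^ m * z ^ m)‖
      ≤ C * ((q : ℝ) + (q : ℝ) * X ^ m * |β|) :=
  major_arc_exponential_sum_approx_general m
end

section
/- Let n ≥ 2 and m_0, …, m_n ≥ 2 be integers with ∑_{j=0}^n 1/m_j ≥ 3, and let positive integers γ_0, …, γ_n be given. Then ∑_{q=1}^∞ q^{-Γ+ε} ∏_{j=0}^n gcd(γ_j, q)^{1/m_j} ≪_ε ∏_{j=0}^n γ_j^{1/m_j}, where Γ = ∑_{j=0}^n 1/m_j − 1 and ε > 0 is sufficiently small. -/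
open scoped BigOperators

/-!
Since `Γ ≥ 2` and `ε ≤ 1/2`, the exponent `-Γ + ε` is at most `-3/2`, and `gcd(γ_j, q) ≤ γ_j`.
Hence each term is at most `q^(-3/2) ∏_j γ_j^{1/m_j}`, and the series is dominated by
`ζ(3/2) ∏_j γ_j^{1/m_j}`.
-/

lemma summable_pnat_rpow {t : ℝ} (ht : t < -1) : Summable fun q : ℕ+ => (q : ℝ) ^ t :=
  summable_pnat_iff_summable_nat.mpr (Real.summable_nat_rpow.mpr ht)

lemma prod_gcd_rpow_le_prod_rpow {ι : Type*} [Fintype ι] (γ : ι → ℕ) (hγ : ∀ j, 0 < γ j)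
    (e : ι → ℝ) (he : ∀ j, 0 ≤ e j) (q : ℕ) :
    ∏ j, (Nat.gcd (γ j) q : ℝ) ^ e j ≤ ∏ j, (γ j : ℝ) ^ e j :=
  Finset.prod_le_prod (fun j _ => by positivity) fun j _ =>
    Real.rpow_le_rpow (Nat.cast_nonneg _) (by exact_mod_cast Nat.gcd_le_left _ (hγ j)) (he j)

lemma tsum_rpow_mul_prod_gcd_rpow_le {ι : Type*} [Fintype ι] (γ : ι → ℕ) (hγ : ∀ j, 0 < γ j)
    (e : ι → ℝ) (he : ∀ j, 0 ≤ e j) {s t : ℝ} (hst : s ≤ t) (ht : t < -1) :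
    ∑' q : ℕ+, (q : ℝ) ^ s * ∏ j, (Nat.gcd (γ j) q : ℝ) ^ e j
      ≤ (∑' q : ℕ+, (q : ℝ) ^ t) * ∏ j, (γ j : ℝ) ^ e j := by
  have hterm : ∀ q : ℕ+, (q : ℝ) ^ s * ∏ j, (Nat.gcd (γ j) q : ℝ) ^ e j
      ≤ (q : ℝ) ^ t * ∏ j, (γ j : ℝ) ^ e j := fun q =>
    mul_le_mul (Real.rpow_le_rpow_of_exponent_le (Nat.one_le_cast.mpr q.pos) hst)
      (prod_gcd_rpow_le_prod_rpow γ hγ e he q) (by positivity) (by positivity)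
  have hmajorant := (summable_pnat_rpow ht).mul_right (∏ j, (γ j : ℝ) ^ e j)
  calc ∑' q : ℕ+, (q : ℝ) ^ s * ∏ j, (Nat.gcd (γ j) q : ℝ) ^ e j
      ≤ ∑' q : ℕ+, (q : ℝ) ^ t * ∏ j, (γ j : ℝ) ^ e j :=
        (hmajorant.of_nonneg_of_le (fun q => by positivity) hterm).tsum_le_tsum hterm hmajorant
    _ = (∑' q : ℕ+, (q : ℝ) ^ t) * ∏ j, (γ j : ℝ) ^ e j := tsum_mul_right

theorem singular_series_tail_bound_general (n : ℕ) (m : Fin (n + 1) → ℕ)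
    (hsum : 3 ≤ ∑ j, (1 : ℝ) / m j) :
    ∃ ε₀ : ℝ, 0 < ε₀ ∧ ∀ ε : ℝ, 0 < ε → ε ≤ ε₀ →
      ∃ C : ℝ, 0 < C ∧ ∀ γ : Fin (n + 1) → ℕ, (∀ j, 0 < γ j) →
        (∑' q : ℕ+, ((q : ℝ) ^ (-(∑ j, (1 : ℝ) / m j - 1) + ε) *
          ∏ j, (Nat.gcd (γ j) q : ℝ) ^ ((1 : ℝ) / m j)))
        ≤ C * ∏ j, (γ j : ℝ) ^ ((1 : ℝ) / m j) := by
  have hexp : (-(3 / 2) : ℝ) < -1 := by norm_num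
  refine ⟨1 / 2, by norm_num, fun ε _ hε => ⟨∑' q : ℕ+, (q : ℝ) ^ (-(3 / 2) : ℝ), ?_, ?_⟩⟩
  · exact (summable_pnat_rpow hexp).tsum_pos (fun q => by positivity) 1 (by norm_num)
  · intro γ hγ
    exact tsum_rpow_mul_prod_gcd_rpow_le γ hγ _ (fun j => by positivity) (by linarith) hexp

/-- `∑_q q^{-Γ+ε} ∏_j gcd(γ_j, q)^{1/m_j} ≪ ∏_j γ_j^{1/m_j}` where
`Γ = ∑ 1/m_j - 1 ≥ 2` and `ε > 0` is sufficiently small. -/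
theorem singular_series_tail_bound (n : ℕ) (hn : 2 ≤ n) (m : Fin (n + 1) → ℕ)
    (hm : ∀ j, 2 ≤ m j) (hsum : 3 ≤ ∑ j, (1 : ℝ) / m j) :
    ∃ ε₀ : ℝ, 0 < ε₀ ∧ ∀ ε : ℝ, 0 < ε → ε ≤ ε₀ →
      ∃ C : ℝ, 0 < C ∧ ∀ γ : Fin (n + 1) → ℕ, (∀ j, 0 < γ j) →
        (∑' q : ℕ+, ((q : ℝ) ^ (-(∑ j, (1 : ℝ) / m j - 1) + ε) *
          ∏ j, (Nat.gcd (γ j) q : ℝ) ^ ((1 : ℝ) / m j)))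
        ≤ C * ∏ j, (γ j : ℝ) ^ ((1 : ℝ) / m j) :=
  singular_series_tail_bound_general n m hsum
end

section
/- Let p be a prime, n ≥ 1, m_0, …, m_n ≥ 2 integers, and h_0, …, h_n ∈ 𝔽_p^*. Then ∑_{a ∈ 𝔽_p^*} #{ k ∈ (𝔽_p)^{n+1} : a h_j^{m_j} ≡ k_j^{m_j} (mod p) for all 0 ≤ j ≤ n } = (p−1) · ∏_{j=0}^n gcd(m_j, p−1) / lcm(gcd(m_0, p−1), …, gcd(m_n, p−1)). -/
open scoped BigOperators

section helpers

open Classical in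
lemma card_fiber_addHom {A B : Type*} [AddGroup A] [AddGroup B] (f : A →+ B) (c : B) :
    Nat.card {y : A // f y = c} = if ∃ y, f y = c then Nat.card f.ker else 0 := by
  split_ifs with hex
  · obtain ⟨y₀, hy₀⟩ := hex
    apply Nat.card_congr
    refine ⟨fun y => ⟨y.1 - y₀, ?_⟩, fun z => ⟨z.1 + y₀, ?_⟩, fun y => ?_, fun z => ?_⟩
    · simp [AddMonoidHom.mem_ker, map_sub, y.2, hy₀]
    · have := AddMonoidHom.mem_ker.mp z.2
      simp [map_add, hy₀, this]
    · ext; simp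
    · ext; simp
  · have : IsEmpty {y : A // f y = c} := ⟨fun y => hex ⟨y.1, y.2⟩⟩
    exact Nat.card_of_isEmpty

variable (N : ℕ) [NeZero N]

lemma range_mulLeft_eq (a : ℕ) :
    (AddMonoidHom.mulLeft ((a : ℕ) : ZMod N)).range
      = AddSubgroup.zmultiples ((a : ℕ) : ZMod N) := by
  ext c
  simp only [AddMonoidHom.mem_range, AddSubgroup.mem_zmultiples_iff,
    AddMonoidHom.coe_mulLeft]
  constructor
  · rintro ⟨y, rfl⟩
    refine ⟨(y.val : ℤ), ?_⟩
    rw [zsmul_eq_mul]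
    push_cast
    rw [ZMod.natCast_val, ZMod.cast_id, mul_comm]
  · rintro ⟨k, rfl⟩
    refine ⟨((k : ℤ) : ZMod N), ?_⟩
    rw [zsmul_eq_mul, mul_comm]

lemma card_range_mulLeft (a : ℕ) :
    Nat.card (AddMonoidHom.mulLeft ((a : ℕ) : ZMod N)).range = N / N.gcd a := by
  rw [range_mulLeft_eq, Nat.card_zmultiples, ZMod.addOrderOf_coe a (NeZero.ne N)]

lemma card_ker_mulLeft (a : ℕ) :
    Nat.card (AddMonoidHom.mulLeft ((a : ℕ) : ZMod N)).ker = N.gcd a := by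
  set f := AddMonoidHom.mulLeft ((a : ℕ) : ZMod N)
  have h1 : Nat.card (ZMod N) = Nat.card (ZMod N ⧸ f.ker) * Nat.card f.ker :=
    AddSubgroup.card_eq_card_quotient_mul_card_addSubgroup _
  have h2 : Nat.card (ZMod N ⧸ f.ker) = N / N.gcd a := by
    rw [Nat.card_congr (QuotientAddGroup.quotientKerEquivRange f).toEquiv]
    exact card_range_mulLeft N a
  have hNcard : Nat.card (ZMod N) = N := Nat.card_zmod N
  have hg : N.gcd a ∣ N := Nat.gcd_dvd_left _ _
  have hNpos : 0 < N := Nat.pos_of_ne_zero (NeZero.ne N)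
  have hgpos : 0 < N.gcd a := Nat.gcd_pos_of_pos_left a hNpos
  have hgN : N / N.gcd a ≠ 0 := Nat.div_ne_zero_iff.mpr ⟨hgpos.ne', Nat.le_of_dvd hNpos hg⟩
  rw [hNcard, h2] at h1
  have h3 : N / N.gcd a * N.gcd a = N := Nat.div_mul_cancel hg
  have := h1.symm.trans h3.symm
  exact Nat.eq_of_mul_eq_mul_left (Nat.pos_of_ne_zero hgN) this

lemma zmod_exists_mul_iff (a : ℕ) (c : ZMod N) :
    (∃ y : ZMod N, ((a : ℕ) : ZMod N) * y = c) ↔ N.gcd a ∣ c.val := by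
  constructor
  · rintro ⟨y, rfl⟩
    have hcast : (((a * y.val : ℕ) : ZMod N)) = ((a : ℕ) : ZMod N) * y := by
      push_cast
      rw [ZMod.natCast_val, ZMod.cast_id]
    rw [← hcast, ZMod.val_natCast]
    rw [Nat.dvd_mod_iff (Nat.gcd_dvd_left _ _)]
    exact Dvd.dvd.mul_right (Nat.gcd_dvd_right _ _) _
  · intro hdvd
    obtain ⟨t, ht⟩ := hdvd
    have hbez : ((N.gcd a : ℕ) : ZMod N) = ((a : ℕ) : ZMod N) * ((N.gcdB a : ℤ) : ZMod N) := by
      have hh := Nat.gcd_eq_gcd_ab N a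
      calc ((N.gcd a : ℕ) : ZMod N) = (((N.gcd a : ℤ)) : ZMod N) := by push_cast; rfl
        _ = (((N : ℤ) * N.gcdA a + (a : ℤ) * N.gcdB a : ℤ) : ZMod N) := by rw [← hh]
        _ = _ := by push_cast [ZMod.natCast_self]; ring
    refine ⟨((N.gcdB a : ℤ) : ZMod N) * (t : ZMod N), ?_⟩
    have : c = ((c.val : ℕ) : ZMod N) := by rw [ZMod.natCast_val, ZMod.cast_id]
    rw [this, ht]
    push_cast
    rw [← mul_assoc, ← hbez]

lemma card_subtype_dvd_val (L : ℕ) (hL : L ∣ N) :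
    Nat.card {c : ZMod N // L ∣ c.val} = N / L := by
  have hiff : ∀ c : ZMod N, (L ∣ c.val) ↔ (∃ y : ZMod N, ((L : ℕ) : ZMod N) * y = c) := by
    intro c
    rw [zmod_exists_mul_iff N L c, Nat.gcd_comm, Nat.gcd_eq_left hL]
  rw [Nat.card_congr (Equiv.subtypeEquivRight hiff)]
  have : Nat.card {c : ZMod N // ∃ y : ZMod N, ((L : ℕ) : ZMod N) * y = c}
      = Nat.card (AddMonoidHom.mulLeft ((L : ℕ) : ZMod N)).range := by
    apply Nat.card_congr
    exact Equiv.subtypeEquivRight fun c =>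
      (AddMonoidHom.mem_range (f := AddMonoidHom.mulLeft ((L : ℕ) : ZMod N))).symm
  rw [this, card_range_mulLeft, Nat.gcd_comm, Nat.gcd_eq_left hL]

end helpers

/-- Averaging the count of solutions over `a ∈ 𝔽_p^*`. -/
theorem sum_count_power_residue_solutions (p : ℕ) [hp : Fact p.Prime] (n : ℕ) (hn : 1 ≤ n)
    (m : Fin (n + 1) → ℕ) (hm : ∀ j, 2 ≤ m j) (h : Fin (n + 1) → (ZMod p)ˣ) :
    ∑ a : (ZMod p)ˣ,
      Nat.card {k : Fin (n + 1) → ZMod p //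
        ∀ j, (a : ZMod p) * ((h j : ZMod p)) ^ (m j) = (k j) ^ (m j)}
    = (p - 1) * (∏ j, Nat.gcd (m j) (p - 1)) /
        (Finset.univ.lcm fun j => Nat.gcd (m j) (p - 1)) := by
  classical
  have hp2 : 2 ≤ p := hp.out.two_le
  set N := p - 1 with hNdef
  have hN0 : N ≠ 0 := by omega
  haveI : NeZero N := ⟨hN0⟩
  have hcard : Nat.card (Multiplicative (ZMod N)) = Nat.card (ZMod p)ˣ := by
    simp only [Nat.card_eq_fintype_card]
    rw [ZMod.card_units p, Fintype.card_multiplicative, ZMod.card]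
  let e : Multiplicative (ZMod N) ≃* (ZMod p)ˣ := mulEquivOfCyclicCardEq hcard
  let E : ZMod N ≃ (ZMod p)ˣ := Multiplicative.ofAdd.trans e.toEquiv
  have hE : ∀ (k : ℕ) (x : ZMod N), E (k • x) = (E x) ^ k := by
    intro k x
    show e (Multiplicative.ofAdd (k • x)) = (e (Multiplicative.ofAdd x)) ^ k
    rw [ofAdd_nsmul, map_pow]
  set L := Finset.univ.lcm fun j => Nat.gcd (m j) N with hLdef
  have hLdvdN : L ∣ N := Finset.lcm_dvd fun j _ => Nat.gcd_dvd_right _ _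
  have hLpos : 0 < L := Nat.pos_of_dvd_of_pos hLdvdN (Nat.pos_of_ne_zero hN0)
  have key : ∀ (a : (ZMod p)ˣ) (j : Fin (n + 1)),
      Nat.card {x : ZMod p // (a : ZMod p) * ((h j : ZMod p)) ^ (m j) = x ^ (m j)}
      = if Nat.gcd (m j) N ∣ (E.symm a).val then Nat.gcd (m j) N else 0 := by
    intro a j
    have hm0 : m j ≠ 0 := by have := hm j; omega
    have e1 : {x : ZMod p // (a : ZMod p) * ((h j : ZMod p)) ^ (m j) = x ^ (m j)}
        ≃ {u : (ZMod p)ˣ // a * (h j) ^ (m j) = u ^ (m j)} :=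
      { toFun := fun x => ⟨Units.mk0 x.1 (by
          have hx := x.2
          have hne : ((a * (h j) ^ (m j) : (ZMod p)ˣ) : ZMod p) ≠ 0 := Units.ne_zero _
          push_cast at hne
          rw [hx] at hne
          intro hx0
          rw [hx0] at hne
          exact hne (zero_pow hm0)),
          by
            ext
            push_cast
            exact x.2⟩,
        invFun := fun u => ⟨(u.1 : ZMod p), by
          have hu := congrArg (Units.val) u.2
          push_cast at hu
          exact hu⟩,
        left_inv := fun x => Subtype.ext rfl,
        right_inv := fun u => Subtype.ext (Units.ext rfl) }
    have e2 : {u : (ZMod p)ˣ // a * (h j) ^ (m j) = u ^ (m j)}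
        ≃ {v : (ZMod p)ˣ // a = v ^ (m j)} :=
      { toFun := fun u => ⟨u.1 * (h j)⁻¹, by
          rw [mul_pow, inv_pow, ← u.2, mul_inv_cancel_right]⟩,
        invFun := fun v => ⟨v.1 * (h j), by rw [mul_pow, ← v.2]⟩,
        left_inv := fun u => Subtype.ext (inv_mul_cancel_right _ _),
        right_inv := fun v => Subtype.ext (mul_inv_cancel_right _ _) }
    have e3 : {v : (ZMod p)ˣ // a = v ^ (m j)}
        ≃ {y : ZMod N // (AddMonoidHom.mulLeft ((m j : ℕ) : ZMod N)) y = E.symm a} := by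
      refine Equiv.subtypeEquiv E.symm fun v => ?_
      have h1 : E ((m j) • (E.symm v)) = v ^ (m j) := by rw [hE, E.apply_symm_apply]
      show (a = v ^ (m j)) ↔ ((m j : ℕ) : ZMod N) * (E.symm v) = E.symm a
      rw [← nsmul_eq_mul]
      constructor
      · intro hav
        have h2 : E.symm a = E.symm (E ((m j) • E.symm v)) := by rw [h1, ← hav]
        rw [E.symm_apply_apply] at h2
        exact h2.symm
      · intro hyv
        have h2 : a = E (E.symm a) := (E.apply_symm_apply a).symm
        rw [h2, ← hyv, h1]
    rw [Nat.card_congr (e1.trans (e2.trans e3)), card_fiber_addHom, card_ker_mulLeft]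
    rw [Nat.gcd_comm N (m j)]
    by_cases hc : Nat.gcd (m j) N ∣ (E.symm a).val
    · rw [if_pos hc, if_pos]
      obtain ⟨y, hy⟩ := (zmod_exists_mul_iff N (m j) (E.symm a)).mpr (by rwa [Nat.gcd_comm])
      exact ⟨y, hy⟩
    · rw [if_neg hc, if_neg]
      rintro ⟨y, hy⟩
      exact hc (by
        have := (zmod_exists_mul_iff N (m j) (E.symm a)).mp ⟨y, hy⟩
        rwa [Nat.gcd_comm] at this)
  have step1 : ∀ a : (ZMod p)ˣ,
      Nat.card {k : Fin (n + 1) → ZMod p //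
        ∀ j, (a : ZMod p) * ((h j : ZMod p)) ^ (m j) = (k j) ^ (m j)}
      = ∏ j, Nat.card {x : ZMod p // (a : ZMod p) * ((h j : ZMod p)) ^ (m j) = x ^ (m j)} := by
    intro a
    rw [Nat.card_congr (Equiv.subtypePiEquivPi (β := fun _ : Fin (n + 1) => ZMod p)
      (p := fun j x => (a : ZMod p) * ((h j : ZMod p)) ^ (m j) = x ^ (m j))), Nat.card_pi]
  calc ∑ a : (ZMod p)ˣ,
      Nat.card {k : Fin (n + 1) → ZMod p //
        ∀ j, (a : ZMod p) * ((h j : ZMod p)) ^ (m j) = (k j) ^ (m j)}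
      = ∑ a : (ZMod p)ˣ, ∏ j, (if Nat.gcd (m j) N ∣ (E.symm a).val then Nat.gcd (m j) N else 0) := by
        refine Finset.sum_congr rfl fun a _ => ?_
        rw [step1 a]
        exact Finset.prod_congr rfl fun j _ => key a j
    _ = ∑ a : (ZMod p)ˣ, (if L ∣ (E.symm a).val then ∏ j, Nat.gcd (m j) N else 0) := by
        refine Finset.sum_congr rfl fun a _ => ?_
        by_cases hall : ∀ j, Nat.gcd (m j) N ∣ (E.symm a).val
        · rw [if_pos (Finset.lcm_dvd fun j _ => hall j)]
          exact Finset.prod_congr rfl fun j _ => if_pos (hall j)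
        · push_neg at hall
          obtain ⟨j0, hj0⟩ := hall
          rw [if_neg]
          · exact Finset.prod_eq_zero (Finset.mem_univ j0) (if_neg hj0)
          · intro hLd
            exact hj0 (dvd_trans (Finset.dvd_lcm (f := fun j => Nat.gcd (m j) N) (Finset.mem_univ j0)) hLd)
    _ = (Finset.univ.filter fun a : (ZMod p)ˣ => L ∣ (E.symm a).val).card
          * ∏ j, Nat.gcd (m j) N := by
        rw [← Finset.sum_filter, Finset.sum_const, smul_eq_mul]
    _ = (N / L) * ∏ j, Nat.gcd (m j) N := by
        congr 1
        have h1 : (Finset.univ.filter fun a : (ZMod p)ˣ => L ∣ (E.symm a).val).card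
            = Nat.card {a : (ZMod p)ˣ // L ∣ (E.symm a).val} := by
          rw [Nat.card_eq_fintype_card, Fintype.card_subtype]
        rw [h1]
        exact (Nat.card_congr (Equiv.subtypeEquiv E.symm fun a => Iff.rfl)).trans
          (card_subtype_dvd_val N L hLdvdN)
    _ = N * (∏ j, Nat.gcd (m j) N) / L := by
        obtain ⟨t, ht⟩ := hLdvdN
        rw [ht, Nat.mul_div_cancel_left _ hLpos, mul_assoc, Nat.mul_div_cancel_left _ hLpos]
end
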